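/- arXiv:1703.09813 — 5 statements merged into one kernel-verified Lean document; each statement's English description precedes it below -/
import Mathlib

section
/- Let L_T(θ, λ) be jointly continuous, convex in θ for each λ, with a unique minimizer θ̂(λ) for each λ in a neighborhood W of λ₀. Suppose S is a linear subspace of ℝ^p such that for all λ ∈ W, argmin_θ L_T(θ, λ) = argmin_{θ ∈ S} L_T(θ, λ), and suppose L_T restricted to S × W is twice continuously differentiable with, at (θ̂(λ₀), λ₀), a positive-definite Hessian in the S-directions. Then there is a neighborhood U ⊆ W of λ₀ on which λ ↦ θ̂(λ) is continuously differentiable. -/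
/-! Parametrize `S` by `β ↦ U β`. At `λ₀` the point `β₀` is a critical point of
`β ↦ L_T(U β, λ₀)`, and positive definiteness of its Hessian makes the `β`-derivative of the
gradient invertible, so the implicit function theorem gives a `C¹` family `λ ↦ β(λ)` of critical
points of `β ↦ L_T(U β, λ)`. By convexity `U β(λ)` minimizes `L_T(·, λ)` over `S`, hence over all of
`ℝᵖ` because `S` is a local optimality space, and uniqueness of the minimizer gives
`θ̂(λ) = U β(λ)`. -/

open Filter Matrix Set Topology
open scoped ContDiff

section

variable {E F : Type*} [NormedAddCommGroup E] [NormedSpace ℝ E] [NormedAddCommGroup F]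
  [NormedSpace ℝ F]

theorem ConvexOn.isMinOn_of_hasFDerivAt_eq_zero {s : Set E} {φ : E → ℝ} (hφ : ConvexOn ℝ s φ)
    {x : E} (hx : x ∈ s) (hcrit : HasFDerivAt φ (0 : E →L[ℝ] ℝ) x) : IsMinOn φ s x := by
  intro y hy
  let γ : ℝ →ᵃ[ℝ] E := AffineMap.lineMap x y
  have hγ : ConvexOn ℝ (γ ⁻¹' s) (φ ∘ γ) := hφ.comp_affineMap γ
  have hcrit' : HasFDerivAt φ (0 : E →L[ℝ] ℝ) (γ 0) := by rwa [AffineMap.lineMap_apply_zero]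
  have hderiv : HasDerivAt (φ ∘ γ) 0 0 := by
    simpa using hcrit'.comp_hasDerivAt (0 : ℝ) AffineMap.hasDerivAt_lineMap
  have := hγ.le_slope_of_hasDerivAt (x := 0) (y := 1) (by simpa [γ] using hx)
    (by simpa [γ] using hy) one_pos hderiv
  simpa [slope, γ] using this

theorem ConvexOn.isMinOn_range_of_hasFDerivAt_comp_eq_zero {φ : F → ℝ} (hφ : ConvexOn ℝ univ φ)
    (U : E →ₗ[ℝ] F) {x : E} (hcrit : HasFDerivAt (fun x => φ (U x)) (0 : E →L[ℝ] ℝ) x) :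
    IsMinOn φ (LinearMap.range U) (U x) := by
  rintro _ ⟨y, rfl⟩
  exact (hφ.comp_linearMap U).isMinOn_of_hasFDerivAt_eq_zero (mem_univ x) hcrit (mem_univ y)

theorem ContinuousLinearMap.isInvertible_of_pos [FiniteDimensional ℝ E] (A : E →L[ℝ] E →L[ℝ] ℝ)
    (hA : ∀ v ≠ 0, 0 < A v v) : A.IsInvertible := by
  have hinj : Function.Injective A := by
    refine (injective_iff_map_eq_zero A).mpr fun v hv => ?_
    by_contra hne
    simpa [hv] using hA v hne
  have hdim : Module.finrank ℝ E = Module.finrank ℝ (E →L[ℝ] ℝ) :=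
    Subspace.dual_finrank_eq.symm.trans LinearMap.toContinuousLinearMap.finrank_eq
  exact ⟨((A : E →ₗ[ℝ] E →L[ℝ] ℝ).linearEquivOfInjective hinj hdim).toContinuousLinearEquiv, rfl⟩

theorem exists_contDiffAt_fderiv_eq_zero_of_pos [FiniteDimensional ℝ E] [CompleteSpace F]
    {f : E × F → ℝ} {x₀ : E} {y₀ : F} (hf : ContDiffAt ℝ 2 f (x₀, y₀))
    (hcrit : fderiv ℝ (fun x => f (x, y₀)) x₀ = 0)
    (hpos : ∀ v ≠ 0, 0 < fderiv ℝ (fderiv ℝ fun x => f (x, y₀)) x₀ v v) :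
    ∃ ψ : F → E, ContDiffAt ℝ 1 ψ y₀ ∧ ∀ᶠ y in 𝓝 y₀, fderiv ℝ (fun x => f (x, y)) (ψ y) = 0 := by
  -- arguments swapped, since `ContDiffAt.implicitFunction` solves for the second coordinate
  set G : F × E → E →L[ℝ] ℝ := fun z => fderiv ℝ (fun x => f (x, z.1)) z.2
  have hf' : ContDiffAt ℝ 2 (fun p : (F × E) × E => f (p.2, p.1.1)) ((y₀, x₀), x₀) :=
    hf.comp ((y₀, x₀), x₀) (by fun_prop)
  have hG : ContDiffAt ℝ 1 G (y₀, x₀) :=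
    ContDiffAt.fderiv (f := fun z x => f (x, z.1)) hf' contDiffAt_snd (by norm_num)
  have hGx : fderiv ℝ G (y₀, x₀) ∘L .inr ℝ F E = fderiv ℝ (fderiv ℝ fun x => f (x, y₀)) x₀ :=
    (((hG.differentiableAt one_ne_zero).hasFDerivAt).comp x₀
      (hasFDerivAt_prodMk_right y₀ x₀)).fderiv.symm
  have hinv : (fderiv ℝ G (y₀, x₀) ∘L .inr ℝ F E).IsInvertible :=
    hGx ▸ ContinuousLinearMap.isInvertible_of_pos _ hpos
  refine ⟨hG.implicitFunction one_ne_zero hinv, hG.contDiffAt_implicitFunction one_ne_zero hinv, ?_⟩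
  simpa [G, hcrit] using hG.eventually_apply_implicitFunction one_ne_zero hinv

theorem ContDiffAt.exists_isOpen_subset_contDiffOn {n : ℕ∞ω} {g : E → F} {x : E} {s : Set E}
    (hg : ContDiffAt ℝ n g x) (hn : n ≠ ∞) (hs : s ∈ 𝓝 x) :
    ∃ U ⊆ s, IsOpen U ∧ x ∈ U ∧ ContDiffOn ℝ n g U := by
  obtain ⟨U, hU, hUo, hxU⟩ := eventually_nhds_iff.mp ((hg.eventually hn).and hs)
  exact ⟨U, fun y hy => (hU y hy).2, hUo, hxU, fun y hy => (hU y hy).1.contDiffWithinAt⟩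

end

theorem argmin_smooth_on_local_optimality_space_general {p J q : ℕ}
    (LT : (Fin p → ℝ) → (Fin J → ℝ) → ℝ)
    (θhat : (Fin J → ℝ) → (Fin p → ℝ))
    (lam₀ : Fin J → ℝ) (W : Set (Fin J → ℝ)) (hW : IsOpen W) (hlam₀ : lam₀ ∈ W)
    (S : Submodule ℝ (Fin p → ℝ))
    (Umat : Matrix (Fin p) (Fin q) ℝ)
    (hspan : S = Submodule.span ℝ (Set.range fun j => fun i => Umat i j)
    )
    (hconv : ∀ lam, ConvexOn ℝ Set.univ (fun θ => LT θ lam))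
    (hmin : ∀ lam ∈ W, IsMinOn (fun θ => LT θ lam) Set.univ (θhat lam))
    (huniq : ∀ lam ∈ W, ∀ θ, IsMinOn (fun θ' => LT θ' lam) Set.univ θ → θ = θhat lam)
    (hlocopt : ∀ lam ∈ W,
      {θ | IsMinOn (fun θ' => LT θ' lam) Set.univ θ}
        = {θ | θ ∈ S ∧ IsMinOn (fun θ' => LT θ' lam) S θ})
    (hsmooth : ContDiffOn ℝ 2
      (fun x : (Fin q → ℝ) × (Fin J → ℝ) => LT (Umat.mulVec x.1) x.2)
      (Set.univ ×ˢ W))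
    (β₀ : Fin q → ℝ) (hβ₀ : Umat.mulVec β₀ = θhat lam₀)
    (hPD : ∀ v : Fin q → ℝ, v ≠ 0 →
      0 < iteratedFDeriv ℝ 2 (fun β => LT (Umat.mulVec β) lam₀) β₀ ![v, v]) :
    ∃ U : Set (Fin J → ℝ), U ⊆ W ∧ IsOpen U ∧ lam₀ ∈ U ∧ ContDiffOn ℝ 1 θhat U := by
  have hS : S = LinearMap.range Umat.mulVecLin := by rw [hspan, Matrix.range_mulVecLin]; rfl
  have hΩ : IsOpen ((univ : Set (Fin q → ℝ)) ×ˢ W) := isOpen_univ.prod hW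
  have hcrit₀ : fderiv ℝ (fun β => LT (Umat *ᵥ β) lam₀) β₀ = 0 := by
    refine IsLocalMin.fderiv_eq_zero (IsMinOn.isLocalMin (fun β _ => ?_) univ_mem)
    simpa [hβ₀] using hmin lam₀ hlam₀ (mem_univ (Umat *ᵥ β))
  obtain ⟨ψ, hψ, hψcrit⟩ := exists_contDiffAt_fderiv_eq_zero_of_pos
    (hsmooth.contDiffAt (hΩ.mem_nhds ⟨mem_univ β₀, hlam₀⟩)) hcrit₀
    (fun v hv => by simpa [iteratedFDeriv_two_apply] using hPD v hv)
  have hargmin : ∀ lam ∈ W, ∀ β, fderiv ℝ (fun β => LT (Umat *ᵥ β) lam) β = 0 →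
      Umat *ᵥ β = θhat lam := by
    intro lam hlam β hβ
    have hdiff : DifferentiableAt ℝ (fun β => LT (Umat *ᵥ β) lam) β :=
      ((hsmooth.contDiffAt (hΩ.mem_nhds ⟨mem_univ β, hlam⟩)).differentiableAt
        (by norm_num)).comp β (differentiableAt_id.prodMk (differentiableAt_const lam))
    have hminS : IsMinOn (fun θ => LT θ lam) S (Umat *ᵥ β) := hS ▸
      (hconv lam).isMinOn_range_of_hasFDerivAt_comp_eq_zero Umat.mulVecLin (hβ ▸ hdiff.hasFDerivAt)
    exact huniq lam hlam _
      ((Set.ext_iff.mp (hlocopt lam hlam) _).mpr ⟨hS ▸ LinearMap.mem_range_self _ _, hminS⟩)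
  have hθ : θhat =ᶠ[𝓝 lam₀] fun lam => Umat *ᵥ ψ lam := by
    filter_upwards [hW.mem_nhds hlam₀, hψcrit] with lam hlam hcrit
    exact (hargmin lam hlam _ hcrit).symm
  have hθcd : ContDiffAt ℝ 1 θhat lam₀ :=
    (Umat.mulVecLin.toContinuousLinearMap.contDiff.contDiffAt.comp lam₀ hψ).congr_of_eventuallyEq
      hθ
  exact hθcd.exists_isOpen_subset_contDiffOn (by simp) (hW.mem_nhds hlam₀)

/-- If `L_T(θ, λ)` is jointly continuous, convex in `θ`, has a unique minimizer
`θ̂(λ)` for `λ` in a neighborhood `W` of `λ₀`, a linear subspace `S` (with orthonormal basis the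
columns of `Umat`) is a local optimality space on `W`, `L_T` restricted to `S × W` is `C²`, and
the Hessian in the `S`-directions at `(θ̂(λ₀), λ₀)` is positive definite, then `θ̂` is
continuously differentiable on a neighborhood `U ⊆ W` of `λ₀`. -/
theorem argmin_smooth_on_local_optimality_space {p J q : ℕ}
    (LT : (Fin p → ℝ) → (Fin J → ℝ) → ℝ)
    (θhat : (Fin J → ℝ) → (Fin p → ℝ))
    (lam₀ : Fin J → ℝ) (W : Set (Fin J → ℝ)) (hW : IsOpen W) (hlam₀ : lam₀ ∈ W)
    (S : Submodule ℝ (Fin p → ℝ))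
    (Umat : Matrix (Fin p) (Fin q) ℝ)
    (hortho : Umatᵀ * Umat = 1)
    (hspan : S = Submodule.span ℝ (Set.range fun j => fun i => Umat i j)
    )
    (hcont : Continuous (fun x : (Fin p → ℝ) × (Fin J → ℝ) => LT x.1 x.2))
    (hconv : ∀ lam, ConvexOn ℝ Set.univ (fun θ => LT θ lam))
    (hmin : ∀ lam ∈ W, IsMinOn (fun θ => LT θ lam) Set.univ (θhat lam))
    (huniq : ∀ lam ∈ W, ∀ θ, IsMinOn (fun θ' => LT θ' lam) Set.univ θ → θ = θhat lam)
    (hlocopt : ∀ lam ∈ W,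
      {θ | IsMinOn (fun θ' => LT θ' lam) Set.univ θ}
        = {θ | θ ∈ S ∧ IsMinOn (fun θ' => LT θ' lam) S θ})
    (hsmooth : ContDiffOn ℝ 2
      (fun x : (Fin q → ℝ) × (Fin J → ℝ) => LT (Umat.mulVec x.1) x.2)
      (Set.univ ×ˢ W))
    (β₀ : Fin q → ℝ) (hβ₀ : Umat.mulVec β₀ = θhat lam₀)
    (hPD : ∀ v : Fin q → ℝ, v ≠ 0 →
      0 < iteratedFDeriv ℝ 2 (fun β => LT (Umat.mulVec β) lam₀) β₀ ![v, v]) :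
    ∃ U : Set (Fin J → ℝ), U ⊆ W ∧ IsOpen U ∧ lam₀ ∈ U ∧ ContDiffOn ℝ 1 θhat U :=
  argmin_smooth_on_local_optimality_space_general LT θhat lam₀ W hW hlam₀ S Umat hspan hconv hmin
    huniq hlocopt hsmooth β₀ hβ₀ hPD
end

section
/- Suppose θ̂(λ) minimizes the elastic net criterion (1/2)‖y_T − X_T θ‖² + λ₁‖θ‖₁ + (λ₂/2)‖θ‖₂² with λ₂ > 0, the support I of θ̂(λ) is locally constant in λ, and the restriction β̂(λ) (the nonzero coordinates) is differentiable in λ. Then ∂β̂(λ)/∂λ = −(X_{T,I}ᵀ X_{T,I} + λ₂ I)⁻¹ [sgn(β̂(λ)) , β̂(λ)], i.e., the column of the Jacobian with respect to λ₁ is −(X_{T,I}ᵀX_{T,I} + λ₂I)⁻¹ sgn(β̂(λ)) and with respect to λ₂ is −(X_{T,I}ᵀX_{T,I} + λ₂I)⁻¹ β̂(λ). -/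
/-! On the open set where the signs of `β̂` are frozen to `s`, stationarity is the linear system
`(XᵀX) β̂(μ) + μ₁ s + μ₂ β̂(μ) = Xᵀy`. Differentiating it at `λ` gives
`(XᵀX + λ₂ I) Dβ̂(λ) = -[s, β̂(λ)]`, and `XᵀX + λ₂ I` is positive definite because `λ₂ > 0`,
hence invertible. -/

open Matrix Filter Topology

theorem Matrix.PosSemidef.isUnit_add_smul_one {n : Type*} [Fintype n] [DecidableEq n]
    {A : Matrix n n ℝ} (hA : A.PosSemidef) {c : ℝ} (hc : 0 < c) : IsUnit (A + c • 1) :=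
  add_comm A (c • 1) ▸ ((PosDef.one.smul hc).add_posSemidef hA).isUnit

section ImplicitDifferentiation

variable {ι : Type*} [Fintype ι] (A : Matrix ι ι ℝ) (s : ι → ℝ)
  {β : ℝ × ℝ → ι → ℝ} {D : (ℝ × ℝ) →L[ℝ] (ι → ℝ)} {lam : ℝ × ℝ}

theorem hasFDerivAt_mulVec_add_smul_add_smul (hβ : HasFDerivAt β D lam) :
    HasFDerivAt (fun μ : ℝ × ℝ => A *ᵥ β μ + μ.1 • s + μ.2 • β μ)
      (A.mulVecLin.toContinuousLinearMap.comp D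
        + (ContinuousLinearMap.fst ℝ ℝ ℝ).smulRight s
        + (lam.2 • D + (ContinuousLinearMap.snd ℝ ℝ ℝ).smulRight (β lam))) lam :=
  ((A.mulVecLin.toContinuousLinearMap.hasFDerivAt.comp lam hβ).add
    ((ContinuousLinearMap.fst ℝ ℝ ℝ).smulRight s).hasFDerivAt).add
    (hasFDerivAt_snd.smul (𝕜' := ℝ) hβ)

theorem mulVec_fderiv_eq_of_eventually_eq [DecidableEq ι] (c : ι → ℝ)
    (hβ : HasFDerivAt β D lam)
    (hsys : ∀ᶠ μ in 𝓝 lam, A *ᵥ β μ + μ.1 • s + μ.2 • β μ = c) (v : ℝ × ℝ) :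
    (A + lam.2 • 1) *ᵥ D v = -(v.1 • s + v.2 • β lam) := by
  have hconst := (hasFDerivAt_const (𝕜 := ℝ) c lam).congr_of_eventuallyEq hsys
  have hzero := DFunLike.congr_fun ((hasFDerivAt_mulVec_add_smul_add_smul A s hβ).unique hconst) v
  simp only [_root_.add_apply, ContinuousLinearMap.comp_apply,
    ContinuousLinearMap.smulRight_apply, _root_.smul_apply,
    LinearMap.coe_toContinuousLinearMap', mulVecLin_apply, ContinuousLinearMap.coe_fst',
    ContinuousLinearMap.coe_snd', _root_.zero_apply] at hzero
  rw [add_mulVec, smul_mulVec, one_mulVec, eq_neg_iff_add_eq_zero, ← hzero]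
  abel

end ImplicitDifferentiation

theorem elastic_net_jacobian_general {n : ℕ} {ι : Type*} [Fintype ι] [DecidableEq ι]
    (XTI : Matrix (Fin n) ι ℝ) (yT : Fin n → ℝ)
    (βhat : ℝ × ℝ → ι → ℝ)
    (lam : ℝ × ℝ) (hlam₂ : 0 < lam.2)
    (U : Set (ℝ × ℝ)) (hU : IsOpen U) (hlamU : lam ∈ U)
    (hsupp : ∀ μ ∈ U, ∀ i, Real.sign (βhat μ i) = Real.sign (βhat lam i))
    (hstat : ∀ μ ∈ U,
      XTIᵀ.mulVec (XTI.mulVec (βhat μ) - yT)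
        + μ.1 • (fun i => Real.sign (βhat μ i)) + μ.2 • βhat μ = 0)
    (D : (ℝ × ℝ) →L[ℝ] (ι → ℝ))
    (hdiff : HasFDerivAt βhat D lam) :
    D (1, 0) = -((XTIᵀ * XTI + lam.2 • (1 : Matrix ι ι ℝ))⁻¹.mulVec
        (fun i => Real.sign (βhat lam i))) ∧
    D (0, 1) = -((XTIᵀ * XTI + lam.2 • (1 : Matrix ι ι ℝ))⁻¹.mulVec (βhat lam)) := by
  set s : ι → ℝ := fun i => Real.sign (βhat lam i)
  set M := XTIᵀ * XTI + lam.2 • (1 : Matrix ι ι ℝ)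
  have hsys : ∀ᶠ μ in 𝓝 lam,
      (XTIᵀ * XTI) *ᵥ βhat μ + μ.1 • s + μ.2 • βhat μ = XTIᵀ *ᵥ yT := by
    filter_upwards [hU.mem_nhds hlamU] with μ hμ
    have hsign : (fun i => Real.sign (βhat μ i)) = s := funext (hsupp μ hμ)
    rw [← sub_eq_zero, ← hstat μ hμ, hsign, mulVec_sub, mulVec_mulVec]
    abel
  have hgram : (XTIᵀ * XTI).PosSemidef :=
    conjTranspose_eq_transpose_of_trivial XTI ▸ posSemidef_conjTranspose_mul_self XTI
  let := (hgram.isUnit_add_smul_one hlam₂ : IsUnit M).invertible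
  have hsolve (v : ℝ × ℝ) : D v = -(M⁻¹ *ᵥ (v.1 • s + v.2 • βhat lam)) := by
    rw [← mulVec_neg]
    exact (inv_mulVec_eq_vec (mulVec_fderiv_eq_of_eventually_eq _ s _ hdiff hsys v).symm).symm
  exact ⟨by simpa using hsolve (1, 0), by simpa using hsolve (0, 1)⟩

/-- Implicit differentiation for the elastic net. If on a neighborhood `U` of
`λ = (λ₁, λ₂)` the restricted coefficients `β̂(μ)` (the nonzero coordinates, with locally
constant support/signs) satisfy the stationarity condition
`X_{T,I}ᵀ(X_{T,I} β̂ - y_T) + μ₁ sgn(β̂) + μ₂ β̂ = 0`, and `β̂` is differentiable at `λ`, then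
the columns of the Jacobian are `-(X_{T,I}ᵀX_{T,I} + λ₂ I)⁻¹ sgn(β̂(λ))` (w.r.t. `λ₁`) and
`-(X_{T,I}ᵀX_{T,I} + λ₂ I)⁻¹ β̂(λ)` (w.r.t. `λ₂`). -/
theorem elastic_net_jacobian {n : ℕ} {ι : Type*} [Fintype ι] [DecidableEq ι]
    (XTI : Matrix (Fin n) ι ℝ) (yT : Fin n → ℝ)
    (βhat : ℝ × ℝ → ι → ℝ)
    (lam : ℝ × ℝ) (hlam₂ : 0 < lam.2)
    (U : Set (ℝ × ℝ)) (hU : IsOpen U) (hlamU : lam ∈ U)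
    (hsupp : ∀ μ ∈ U, ∀ i, Real.sign (βhat μ i) = Real.sign (βhat lam i))
    (hnz : ∀ i, βhat lam i ≠ 0)
    (hstat : ∀ μ ∈ U,
      XTIᵀ.mulVec (XTI.mulVec (βhat μ) - yT)
        + μ.1 • (fun i => Real.sign (βhat μ i)) + μ.2 • βhat μ = 0)
    (D : (ℝ × ℝ) →L[ℝ] (ι → ℝ))
    (hdiff : HasFDerivAt βhat D lam) :
    D (1, 0) = -((XTIᵀ * XTI + lam.2 • (1 : Matrix ι ι ℝ))⁻¹.mulVec
        (fun i => Real.sign (βhat lam i))) ∧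
    D (0, 1) = -((XTIᵀ * XTI + lam.2 • (1 : Matrix ι ι ℝ))⁻¹.mulVec (βhat lam)) :=
  elastic_net_jacobian_general XTI yT βhat lam hlam₂ U hU hlamU hsupp hstat D hdiff
end

section
/- Fix λ₁ ≥ 0, λ₂ > 0. The elastic net criterion θ ↦ (1/2)‖y − Xθ‖² + λ₁‖θ‖₁ + (λ₂/2)‖θ‖₂² is strongly convex (with parameter λ₂), hence has a unique minimizer θ̂(λ₁, λ₂) for every (λ₁, λ₂), and the map λ ↦ θ̂(λ) is continuous on ℝ₊ × ℝ₊₊. -/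
/-! The ridge term makes the criterion `λ₂`-strongly convex, which gives uniqueness of the
minimizer `θ̂` and the quadratic growth `f θ̂ + λ₂/4 ‖θ - θ̂‖² ≤ f θ` around it. Comparing the criteria
at two parameters `l, l₀` through this growth bound, the distance between their minimizers is
controlled by the change of the criterion, `|Δλ₁| ‖θ‖₁ + |Δλ₂| ‖θ‖² / 2`, evaluated at the two
minimizers; these stay bounded since `λ₂ ‖θ̂‖² ≤ ‖y‖²`, so the distance tends to `0` as `l → l₀`. -/

open Matrix Set Filter Topology

theorem convexOn_finset_sum {E ι : Type*} [AddCommGroup E] [Module ℝ E] {t : Set E}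
    (ht : Convex ℝ t) {s : Finset ι} {f : ι → E → ℝ} (hf : ∀ i ∈ s, ConvexOn ℝ t (f i)) :
    ConvexOn ℝ t (fun x => ∑ i ∈ s, f i x) := by
  classical
  induction s using Finset.induction_on with
  | empty => simpa using convexOn_const (0 : ℝ) ht
  | insert i s hi ih =>
    simp only [Finset.sum_insert hi]
    exact (hf i (Finset.mem_insert_self i s)).add
      (ih fun j hj => hf j (Finset.mem_insert_of_mem hj))

theorem convexOn_const_sub_sq {E : Type*} [AddCommGroup E] [Module ℝ E] (φ : E →ₗ[ℝ] ℝ)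
    (c : ℝ) : ConvexOn ℝ univ (fun x => (c - φ x) ^ 2) :=
  (even_two.convexOn_pow (𝕜 := ℝ)).comp_affineMap (AffineMap.const ℝ E c - φ.toAffineMap)

theorem continuousWithinAt_of_sq_norm_sub_le {T E : Type*} [TopologicalSpace T]
    [SeminormedAddCommGroup E] {f : T → E} {g : T → ℝ} {s : Set T} {t₀ : T}
    (hg : ContinuousWithinAt g s t₀) (hg₀ : g t₀ = 0) (hfg : ∀ t ∈ s, ‖f t - f t₀‖ ^ 2 ≤ g t) :
    ContinuousWithinAt f s t₀ := by
  rw [ContinuousWithinAt, tendsto_iff_norm_sub_tendsto_zero]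
  have hsqrt := hg.sqrt
  rw [ContinuousWithinAt, hg₀, Real.sqrt_zero] at hsqrt
  refine squeeze_zero' (Eventually.of_forall fun _ => norm_nonneg _) ?_ hsqrt
  filter_upwards [self_mem_nhdsWithin] with t ht
  exact Real.le_sqrt_of_sq_le (hfg t ht)

theorem mul_sub_le_abs_mul_add (a : ℝ) {b c : ℝ} (hb : 0 ≤ b) (hc : 0 ≤ c) :
    a * (b - c) ≤ |a| * (b + c) := by
  refine (le_abs_self _).trans ?_
  rw [abs_mul]
  gcongr
  exact (abs_sub _ _).trans_eq (by rw [abs_of_nonneg hb, abs_of_nonneg hc])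

section StrongConvexity

variable {E : Type*} [NormedAddCommGroup E] [NormedSpace ℝ E] {m : ℝ} {f g : E → ℝ} {x : E}

theorem StrongConvexOn.add_sq_norm_sub_le_of_isMinOn (hf : StrongConvexOn univ m f)
    (hx : IsMinOn f univ x) (y : E) : f x + m / 4 * ‖y - x‖ ^ 2 ≤ f y := by
  have hmid := hf.2 (mem_univ x) (mem_univ y) (by norm_num : (0 : ℝ) ≤ 1 / 2)
    (by norm_num : (0 : ℝ) ≤ 1 / 2) (by norm_num)
  have hle : f x ≤ f ((1 / 2 : ℝ) • x + (1 / 2 : ℝ) • y) := hx (mem_univ _)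
  rw [norm_sub_rev] at hmid
  simp only [smul_eq_mul] at hmid
  linarith

theorem StrongConvexOn.sq_norm_sub_le_of_isMinOn (hf : StrongConvexOn univ m f)
    (hx : IsMinOn f univ x) {y : E} (hy : IsMinOn g univ y) :
    m / 4 * ‖x - y‖ ^ 2 ≤ (f y - g y) - (f x - g x) := by
  have hgrowth := hf.add_sq_norm_sub_le_of_isMinOn hx y
  have hgy : g y ≤ g x := hy (mem_univ x)
  rw [norm_sub_rev] at hgrowth
  linarith

end StrongConvexity

theorem ConvexOn.strongConvexOn_add_sq_norm {E : Type*} [NormedAddCommGroup E]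
    [InnerProductSpace ℝ E] {f : E → ℝ} (hf : ConvexOn ℝ univ f) (m : ℝ) :
    StrongConvexOn univ m (fun x => f x + m / 2 * ‖x‖ ^ 2) := by
  rw [strongConvexOn_iff_convex]
  simpa using hf

section ElasticNet

variable {ι κ : Type*} [Fintype ι] [Fintype κ] (X : Matrix κ ι ℝ) (y : κ → ℝ)

theorem convexOn_sum_abs :
    ConvexOn ℝ univ (fun θ : EuclideanSpace ℝ ι => ∑ i, |θ i|) :=
  convexOn_finset_sum convex_univ fun i _ => convexOn_univ_norm.comp_linearMap
    (EuclideanSpace.proj i : EuclideanSpace ℝ ι →L[ℝ] ℝ).toLinearMap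

theorem convexOn_sum_sq_sub_mulVec :
    ConvexOn ℝ univ (fun θ : EuclideanSpace ℝ ι => ∑ k, (y k - X.mulVec θ k) ^ 2) :=
  convexOn_finset_sum convex_univ fun k _ => convexOn_const_sub_sq
    (LinearMap.proj k ∘ₗ X.mulVecLin ∘ₗ (WithLp.linearEquiv 2 ℝ (ι → ℝ)).toLinearMap) (y k)

theorem sum_abs_le_card_mul_norm (θ : EuclideanSpace ℝ ι) :
    ∑ i, |θ i| ≤ Fintype.card ι * ‖θ‖ := by
  simpa using Finset.sum_le_card_nsmul Finset.univ _ _ fun i _ => PiLp.norm_apply_le θ i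

noncomputable def elasticNet (l : ℝ × ℝ) (θ : EuclideanSpace ℝ ι) : ℝ :=
  1 / 2 * ∑ k, (y k - X.mulVec θ k) ^ 2 + l.1 * ∑ i, |θ i| + l.2 / 2 * ‖θ‖ ^ 2

theorem strongConvexOn_elasticNet {l : ℝ × ℝ} (hl : 0 ≤ l.1) :
    StrongConvexOn univ l.2 (elasticNet X y l) :=
  (((convexOn_sum_sq_sub_mulVec X y).smul (by norm_num : (0 : ℝ) ≤ 1 / 2)).add
    (convexOn_sum_abs.smul hl)).strongConvexOn_add_sq_norm l.2

theorem elasticNet_sub_elasticNet (l l' : ℝ × ℝ) (θ : EuclideanSpace ℝ ι) :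
    elasticNet X y l θ - elasticNet X y l' θ =
      (l.1 - l'.1) * ∑ i, |θ i| + (l.2 - l'.2) / 2 * ‖θ‖ ^ 2 := by
  unfold elasticNet
  ring

theorem mul_sq_norm_le_of_isMinOn_elasticNet {l : ℝ × ℝ} (hl : 0 ≤ l.1)
    {θ : EuclideanSpace ℝ ι} (hθ : IsMinOn (elasticNet X y l) univ θ) :
    l.2 * ‖θ‖ ^ 2 ≤ ∑ k, y k ^ 2 := by
  have hle : elasticNet X y l θ ≤ elasticNet X y l 0 := hθ (mem_univ 0)
  have hloss : 0 ≤ ∑ k, (y k - X.mulVec θ k) ^ 2 := by positivity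
  have hpen : 0 ≤ l.1 * ∑ i, |θ i| := by positivity
  simp only [elasticNet, WithLp.ofLp_zero, mulVec_zero, Pi.zero_apply, sub_zero, abs_zero,
    Finset.sum_const_zero, mul_zero, norm_zero] at hle
  linarith

theorem sq_norm_sub_le_of_isMinOn_elasticNet {l l₀ : ℝ × ℝ} (hl : 0 ≤ l.1)
    {θ θ₀ : EuclideanSpace ℝ ι} (hθ : IsMinOn (elasticNet X y l) univ θ)
    (hθ₀ : IsMinOn (elasticNet X y l₀) univ θ₀) :
    l.2 / 4 * ‖θ - θ₀‖ ^ 2 ≤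
      |l.1 - l₀.1| * (∑ i, |θ₀ i| + ∑ i, |θ i|) + |l.2 - l₀.2| / 2 * (‖θ₀‖ ^ 2 + ‖θ‖ ^ 2) := by
  have hstab := (strongConvexOn_elasticNet X y hl).sq_norm_sub_le_of_isMinOn hθ hθ₀
  rw [elasticNet_sub_elasticNet, elasticNet_sub_elasticNet] at hstab
  have hS₀ : 0 ≤ ∑ i, |θ₀ i| := by positivity
  have hS : 0 ≤ ∑ i, |θ i| := by positivity
  have h₁ := mul_sub_le_abs_mul_add (l.1 - l₀.1) hS₀ hS
  have h₂ := mul_sub_le_abs_mul_add ((l.2 - l₀.2) / 2) (sq_nonneg ‖θ₀‖) (sq_nonneg ‖θ‖)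
  rw [abs_div, abs_two] at h₂
  linarith

theorem continuousOn_of_isMinOn_elasticNet {θ : ℝ × ℝ → EuclideanSpace ℝ ι}
    (hθ : ∀ l ∈ {l : ℝ × ℝ | 0 ≤ l.1 ∧ 0 < l.2}, IsMinOn (elasticNet X y l) univ (θ l)) :
    ContinuousOn θ {l : ℝ × ℝ | 0 ≤ l.1 ∧ 0 < l.2} := by
  intro l₀ hl₀
  set B := ∑ k, y k ^ 2
  refine continuousWithinAt_of_sq_norm_sub_le (g := fun l => 4 / l.2 *
    (|l.1 - l₀.1| * (∑ i, |θ l₀ i| + Fintype.card ι * √(B / l.2)) +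
      |l.2 - l₀.2| / 2 * (‖θ l₀‖ ^ 2 + B / l.2))) ?_ (by simp) ?_
  · have := hl₀.2.ne'
    exact ContinuousAt.continuousWithinAt (by fun_prop (disch := assumption))
  · rintro l ⟨hl₁, hl₂⟩
    have hN : ‖θ l‖ ^ 2 ≤ B / l.2 := by
      rw [le_div_iff₀ hl₂, mul_comm]
      exact mul_sq_norm_le_of_isMinOn_elasticNet X y hl₁ (hθ l ⟨hl₁, hl₂⟩)
    have hS : ∑ i, |θ l i| ≤ Fintype.card ι * √(B / l.2) :=
      (sum_abs_le_card_mul_norm _).trans (by gcongr; exact Real.le_sqrt_of_sq_le hN)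
    calc ‖θ l - θ l₀‖ ^ 2 = 4 / l.2 * (l.2 / 4 * ‖θ l - θ l₀‖ ^ 2) := by field_simp
      _ ≤ 4 / l.2 * (|l.1 - l₀.1| * (∑ i, |θ l₀ i| + ∑ i, |θ l i|) +
          |l.2 - l₀.2| / 2 * (‖θ l₀‖ ^ 2 + ‖θ l‖ ^ 2)) := by
        gcongr
        exact sq_norm_sub_le_of_isMinOn_elasticNet X y hl₁ (hθ l ⟨hl₁, hl₂⟩) (hθ l₀ hl₀)
      _ ≤ _ := by gcongr

end ElasticNet

/-- For `λ₁ ≥ 0, λ₂ > 0`, the elastic net criterion is `λ₂`-strongly convex,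
hence has a unique minimizer `θ̂(λ₁, λ₂)`, and the minimizer map is continuous on
`{λ₁ ≥ 0} × {λ₂ > 0}`. -/
theorem elastic_net_strong_convexity_unique_continuous {n p : ℕ}
    (X : Matrix (Fin n) (Fin p) ℝ) (y : Fin n → ℝ)
    (F : ℝ × ℝ → EuclideanSpace ℝ (Fin p) → ℝ)
    (hF : ∀ l : ℝ × ℝ, ∀ θ : EuclideanSpace ℝ (Fin p),
      F l θ = (1 / 2) * ∑ k, (y k - X.mulVec θ k) ^ 2
        + l.1 * ∑ i, |θ i| + (l.2 / 2) * ‖θ‖ ^ 2)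
    (θhat : ℝ × ℝ → EuclideanSpace ℝ (Fin p))
    (hmin : ∀ l ∈ {l : ℝ × ℝ | 0 ≤ l.1 ∧ 0 < l.2}, IsMinOn (F l) Set.univ (θhat l)) :
    (∀ l ∈ {l : ℝ × ℝ | 0 ≤ l.1 ∧ 0 < l.2}, StrongConvexOn Set.univ l.2 (F l)) ∧
    (∀ l ∈ {l : ℝ × ℝ | 0 ≤ l.1 ∧ 0 < l.2},
      ∀ θ : EuclideanSpace ℝ (Fin p), IsMinOn (F l) Set.univ θ → θ = θhat l) ∧
    ContinuousOn θhat {l : ℝ × ℝ | 0 ≤ l.1 ∧ 0 < l.2} := by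
  obtain rfl : F = elasticNet X y := funext₂ hF
  have hconvex : ∀ l ∈ {l : ℝ × ℝ | 0 ≤ l.1 ∧ 0 < l.2},
      StrongConvexOn univ l.2 (elasticNet X y l) :=
    fun l hl => strongConvexOn_elasticNet X y hl.1
  refine ⟨hconvex, fun l hl θ hθ => ?_, continuousOn_of_isMinOn_elasticNet X y hmin⟩
  exact ((hconvex l hl).strictConvexOn hl.2).eq_of_isMinOn hθ (hmin l hl) trivial trivial
end

section
/- Consider the additive-model training criterion with group lasso, fused-type lasso on second differences, and a ridge term: L_T(θ, λ) = (1/2)‖y_T − I_T ∑ᵢ θ^{(i)}‖² + λ₀∑ᵢ‖θ^{(i)}‖₂ + ∑ᵢ λᵢ‖D^{(2)} θ^{(i)}‖₁ + (ε/2)∑ᵢ‖θ^{(i)}‖₂². Its differentiable space at θ̂ is the direct sum over i of: {0} if θ̂^{(i)} = 0, and the null space of the rows of D^{(2)} indexed by the zero entries of D^{(2)} θ̂^{(i)} otherwise. -/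
/-!
Along a line `t ↦ θ̂ + t • u` every term of the criterion is differentiable at `t = 0`
except for a kink `c * |t|`: a norm `‖a + t • b‖` is differentiable at `0` when `a ≠ 0` and equals
`‖b‖ * |t|` when `a = 0`. Since `|t| / t` has the different one-sided limits `±1`, the two-sided
directional derivative exists exactly when the total kink coefficient vanishes, and with positive
weights that happens exactly when every group norm and every `|(D⁽²⁾θ)ⱼ|` with a zero base
point stays zero along `u`.
-/

open Filter Matrix Topology

def HasKinkAtZero (f : ℝ → ℝ) (c : ℝ) : Prop :=
  ∃ g : ℝ → ℝ, DifferentiableAt ℝ g 0 ∧ ∀ t, f t = g t + c * |t|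

theorem DifferentiableAt.hasKinkAtZero {f : ℝ → ℝ} (hf : DifferentiableAt ℝ f 0) :
    HasKinkAtZero f 0 :=
  ⟨f, hf, fun t => by simp⟩

theorem tendsto_mul_abs_div_nhdsGT (c : ℝ) :
    Tendsto (fun t : ℝ => c * |t| / t) (𝓝[>] 0) (𝓝 c) := by
  refine tendsto_const_nhds.congr' ?_
  filter_upwards [self_mem_nhdsWithin] with t (ht : 0 < t)
  rw [abs_of_pos ht, mul_div_cancel_right₀ c ht.ne']

theorem tendsto_mul_abs_div_nhdsLT (c : ℝ) :
    Tendsto (fun t : ℝ => c * |t| / t) (𝓝[<] 0) (𝓝 (-c)) := by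
  refine tendsto_const_nhds.congr' ?_
  filter_upwards [self_mem_nhdsWithin] with t (ht : t < 0)
  rw [abs_of_neg ht, mul_neg, neg_div, mul_div_cancel_right₀ c ht.ne]

namespace HasKinkAtZero

variable {f g : ℝ → ℝ} {c d : ℝ}

theorem add (hf : HasKinkAtZero f c) (hg : HasKinkAtZero g d) :
    HasKinkAtZero (fun t => f t + g t) (c + d) := by
  obtain ⟨f₀, hf₀, hf⟩ := hf
  obtain ⟨g₀, hg₀, hg⟩ := hg
  exact ⟨fun t => f₀ t + g₀ t, hf₀.add hg₀, fun t => by simp only [hf, hg]; ring⟩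

theorem _root_.DifferentiableAt.add_hasKinkAtZero (hf : DifferentiableAt ℝ f 0)
    (hg : HasKinkAtZero g c) : HasKinkAtZero (fun t => f t + g t) c := by
  simpa using hf.hasKinkAtZero.add hg

theorem add_differentiableAt (hf : HasKinkAtZero f c) (hg : DifferentiableAt ℝ g 0) :
    HasKinkAtZero (fun t => f t + g t) c := by
  simpa using hf.add hg.hasKinkAtZero

theorem const_mul (hf : HasKinkAtZero f c) (a : ℝ) :
    HasKinkAtZero (fun t => a * f t) (a * c) := by
  obtain ⟨f₀, hf₀, hf⟩ := hf
  exact ⟨fun t => a * f₀ t, hf₀.const_mul a, fun t => by simp only [hf]; ring⟩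

theorem sum {ι : Type*} {s : Finset ι} {f : ι → ℝ → ℝ} {c : ι → ℝ}
    (h : ∀ i ∈ s, HasKinkAtZero (f i) (c i)) :
    HasKinkAtZero (fun t => ∑ i ∈ s, f i t) (∑ i ∈ s, c i) := by
  induction s using Finset.cons_induction with
  | empty => simpa using (differentiableAt_const (0 : ℝ)).hasKinkAtZero
  | cons i s hi ih =>
    simp only [Finset.sum_cons]
    exact (h i (s.mem_cons_self i)).add (ih fun j hj => h j (Finset.mem_cons_of_mem hj))

theorem exists_tendsto_slope_iff (hf : HasKinkAtZero f c) :
    (∃ d, Tendsto (fun t => (f t - f 0) / t) (𝓝[≠] 0) (𝓝 d)) ↔ c = 0 := by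
  obtain ⟨g, hg, hf⟩ := hf
  have hslope : Tendsto (fun t => (g t - g 0) / t) (𝓝[≠] 0) (𝓝 (deriv g 0)) := by
    refine (hasDerivAt_iff_tendsto_slope.mp hg.hasDerivAt).congr fun t => ?_
    simp [slope_def_field]
  have hsplit : ∀ t, (f t - f 0) / t = (g t - g 0) / t + c * |t| / t := fun t => by
    rw [hf, hf 0]; simp only [abs_zero, mul_zero, add_zero]; ring
  simp only [hsplit]
  constructor
  · rintro ⟨d, hd⟩
    have hkink : Tendsto (fun t : ℝ => c * |t| / t) (𝓝[≠] 0) (𝓝 (d - deriv g 0)) :=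
      (hd.sub hslope).congr fun t => by ring
    have hright := tendsto_nhds_unique (tendsto_mul_abs_div_nhdsGT c)
      (hkink.mono_left (nhdsGT_le_nhdsNE 0))
    have hleft := tendsto_nhds_unique (tendsto_mul_abs_div_nhdsLT c)
      (hkink.mono_left (nhdsLT_le_nhdsNE 0))
    linarith
  · rintro rfl
    exact ⟨deriv g 0, by simpa using hslope⟩

end HasKinkAtZero

open Classical in
theorem hasKinkAtZero_norm_add_smul {E : Type*} [NormedAddCommGroup E] [InnerProductSpace ℝ E]
    (a b : E) : HasKinkAtZero (fun t => ‖a + t • b‖) (if a = 0 then ‖b‖ else 0) := by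
  by_cases ha : a = 0
  · subst ha
    exact ⟨fun _ => 0, differentiableAt_const 0, fun t => by
      simp [norm_smul, Real.norm_eq_abs, mul_comm]⟩
  · simp only [ha, if_false]
    exact ((differentiableAt_id.smul_const b).const_add a).norm ℝ (by simpa using ha)
      |>.hasKinkAtZero

theorem hasKinkAtZero_abs_add_mul (a b : ℝ) :
    HasKinkAtZero (fun t => |a + t * b|) (if a = 0 then |b| else 0) := by
  simpa only [Real.norm_eq_abs, smul_eq_mul] using hasKinkAtZero_norm_add_smul a b

open Classical in
theorem hasKinkAtZero_sqrt_sum_sq_add_mul {ι : Type*} [Fintype ι] (a b : ι → ℝ) :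
    HasKinkAtZero (fun t => √(∑ j, (a j + t * b j) ^ 2))
      (if a = 0 then √(∑ j, b j ^ 2) else 0) := by
  have key := hasKinkAtZero_norm_add_smul (WithLp.toLp 2 a) (WithLp.toLp 2 b)
  simpa only [EuclideanSpace.norm_eq, WithLp.ofLp_add, WithLp.ofLp_smul, Pi.add_apply,
    Pi.smul_apply, smul_eq_mul, Real.norm_eq_abs, sq_abs, WithLp.toLp_eq_zero] using key

theorem ite_eq_zero_iff_imp {α β : Type*} [Zero α] [Zero β] {a : α} [Decidable (a = 0)]
    {b : β} {x : ℝ} (hx : x = 0 ↔ b = 0) :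
    (if a = 0 then x else 0) = 0 ↔ (a = 0 → b = 0) := by
  split_ifs with ha <;> simp [ha, hx]

theorem sqrt_sum_sq_eq_zero_iff {ι : Type*} [Fintype ι] (b : ι → ℝ) :
    √(∑ j, b j ^ 2) = 0 ↔ b = 0 := by
  rw [Real.sqrt_eq_zero (by positivity),
    Fintype.sum_eq_zero_iff_of_nonneg fun j => sq_nonneg _]
  simp [funext_iff]

theorem mul_sum_add_sum_mul_sum_eq_zero_iff {ι κ : Type*} [Fintype ι] [Fintype κ]
    {w₀ : ℝ} {w x : ι → ℝ} {y : ι → κ → ℝ} (hw₀ : 0 < w₀) (hw : ∀ i, 0 < w i)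
    (hx : ∀ i, 0 ≤ x i) (hy : ∀ i j, 0 ≤ y i j) :
    w₀ * ∑ i, x i + ∑ i, w i * ∑ j, y i j = 0 ↔ (∀ i, x i = 0) ∧ ∀ i j, y i j = 0 := by
  have hwy : ∀ i, 0 ≤ w i * ∑ j, y i j :=
    fun i => mul_nonneg (hw i).le (Fintype.sum_nonneg (hy i))
  rw [add_eq_zero_iff_of_nonneg (mul_nonneg hw₀.le (Fintype.sum_nonneg hx))
    (Fintype.sum_nonneg hwy), mul_eq_zero, or_iff_right hw₀.ne',
    Fintype.sum_eq_zero_iff_of_nonneg hx, Fintype.sum_eq_zero_iff_of_nonneg hwy]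
  simp only [funext_iff, Pi.zero_apply, mul_eq_zero, (hw _).ne', false_or,
    Fintype.sum_eq_zero_iff_of_nonneg (f := y _) (hy _)]

theorem additive_model_differentiable_space_general {n nT p : ℕ}
    (IT : Matrix (Fin nT) (Fin n) ℝ) (yT : Fin nT → ℝ)
    (D2 : Matrix (Fin (n - 2)) (Fin n) ℝ)
    (lam₀ : ℝ) (hlam₀ : 0 < lam₀)
    (lam : Fin p → ℝ) (hlam : ∀ i, 0 < lam i)
    (ε : ℝ)
    (LT : (Fin p → Fin n → ℝ) → ℝ)
    (hLT : ∀ θ : Fin p → Fin n → ℝ,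
      LT θ = (1 / 2) * ∑ k, (yT k - IT.mulVec (∑ i, θ i) k) ^ 2
        + lam₀ * ∑ i, Real.sqrt (∑ j, (θ i j) ^ 2)
        + ∑ i, lam i * ∑ j, |D2.mulVec (θ i) j|
        + (ε / 2) * ∑ i, ∑ j, (θ i j) ^ 2)
    (θhat : Fin p → Fin n → ℝ) :
    {u : Fin p → Fin n → ℝ | ∃ d : ℝ,
        Tendsto (fun t : ℝ => (LT (θhat + t • u) - LT θhat) / t)
          (nhdsWithin 0 {0}ᶜ) (nhds d)}
      = {u : Fin p → Fin n → ℝ | ∀ i,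
          (θhat i = 0 → u i = 0) ∧
          (θhat i ≠ 0 → ∀ j, D2.mulVec (θhat i) j = 0 → D2.mulVec (u i) j = 0)} := by
  ext u
  have hkink : HasKinkAtZero (fun t => LT (θhat + t • u))
      (lam₀ * ∑ i, (if θhat i = 0 then √(∑ j, u i j ^ 2) else 0)
        + ∑ i, lam i * ∑ j, (if (D2 *ᵥ θhat i) j = 0 then |(D2 *ᵥ u i) j| else 0)) := by
    simp only [hLT, Pi.add_apply, Pi.smul_apply, smul_eq_mul, mulVec_add, mulVec_smul]
    have hgroups := (HasKinkAtZero.sum (s := .univ) fun i _ =>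
      hasKinkAtZero_sqrt_sum_sq_add_mul (θhat i) (u i)).const_mul lam₀
    have hrows := HasKinkAtZero.sum (s := .univ) fun i _ =>
      (HasKinkAtZero.sum (s := .univ) fun j _ =>
        hasKinkAtZero_abs_add_mul ((D2 *ᵥ θhat i) j) ((D2 *ᵥ u i) j)).const_mul (lam i)
    refine ((DifferentiableAt.add_hasKinkAtZero ?_ hgroups).add hrows).add_differentiableAt ?_
    · simp only [mulVec, dotProduct]
      fun_prop
    · fun_prop
  have hslope := hkink.exists_tendsto_slope_iff
  simp only [zero_smul, add_zero] at hslope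
  simp only [Set.mem_ofPred_eq, hslope]
  rw [mul_sum_add_sum_mul_sum_eq_zero_iff hlam₀ hlam
    (fun _ => ite_nonneg (Real.sqrt_nonneg _) le_rfl)
    (fun _ _ => ite_nonneg (abs_nonneg _) le_rfl)]
  simp only [ite_eq_zero_iff_imp (sqrt_sum_sq_eq_zero_iff _), ite_eq_zero_iff_imp abs_eq_zero]
  refine ⟨fun ⟨hgroups, hrows⟩ i => ⟨hgroups i, fun _ => hrows i⟩,
    fun h => ⟨fun i => (h i).1, fun i j hj => ?_⟩⟩
  by_cases hθ : θhat i = 0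
  · simp [(h i).1 hθ]
  · exact (h i).2 hθ j hj

/-- The differentiable space of the additive-model training criterion
`(1/2)‖y_T − I_T ∑ᵢ θ⁽ⁱ⁾‖² + λ₀∑ᵢ‖θ⁽ⁱ⁾‖₂ + ∑ᵢ λᵢ‖D⁽²⁾θ⁽ⁱ⁾‖₁ + (ε/2)∑ᵢ‖θ⁽ⁱ⁾‖₂²`
at `θ̂` is the direct sum over `i` of: `{0}` if `θ̂⁽ⁱ⁾ = 0`, and the null space of the rows of
`D⁽²⁾` indexed by the zero entries of `D⁽²⁾θ̂⁽ⁱ⁾` otherwise. -/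
theorem additive_model_differentiable_space {n nT p : ℕ}
    (IT : Matrix (Fin nT) (Fin n) ℝ) (yT : Fin nT → ℝ)
    (D2 : Matrix (Fin (n - 2)) (Fin n) ℝ)
    (hD2 : ∀ (j : Fin (n - 2)) (i : Fin n),
      D2 j i = if (i : ℕ) = (j : ℕ) then 1
        else if (i : ℕ) = (j : ℕ) + 1 then -2
        else if (i : ℕ) = (j : ℕ) + 2 then 1 else 0)
    (lam₀ : ℝ) (hlam₀ : 0 < lam₀)
    (lam : Fin p → ℝ) (hlam : ∀ i, 0 < lam i)
    (ε : ℝ) (hε : 0 < ε)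
    (LT : (Fin p → Fin n → ℝ) → ℝ)
    (hLT : ∀ θ : Fin p → Fin n → ℝ,
      LT θ = (1 / 2) * ∑ k, (yT k - IT.mulVec (∑ i, θ i) k) ^ 2
        + lam₀ * ∑ i, Real.sqrt (∑ j, (θ i j) ^ 2)
        + ∑ i, lam i * ∑ j, |D2.mulVec (θ i) j|
        + (ε / 2) * ∑ i, ∑ j, (θ i j) ^ 2)
    (θhat : Fin p → Fin n → ℝ) :
    {u : Fin p → Fin n → ℝ | ∃ d : ℝ,
        Tendsto (fun t : ℝ => (LT (θhat + t • u) - LT θhat) / t)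
          (nhdsWithin 0 {0}ᶜ) (nhds d)}
      = {u : Fin p → Fin n → ℝ | ∀ i,
          (θhat i = 0 → u i = 0) ∧
          (θhat i ≠ 0 → ∀ j, D2.mulVec (θhat i) j = 0 → D2.mulVec (u i) j = 0)} :=
  additive_model_differentiable_space_general IT yT D2 lam₀ hlam₀ lam hlam ε LT hLT θhat
end

section
/- Let f(θ, λ) = g(θ) + λh(θ) where g is m-strongly convex and twice continuously differentiable on ℝ^p, h is convex and twice continuously differentiable on an open set containing the solution path, and λ > 0. Let θ̂(λ) denote the unique minimizer. If θ̂ is differentiable at λ, then d/dλ [ h(θ̂(λ)) ] = ∇h(θ̂(λ))ᵀ θ̂'(λ) ≤ 0; that is, the penalty value h(θ̂(λ)) is non-increasing in λ. -/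
open Filter

/-! The minimizers at two penalty levels `s < t` can be compared against each other: adding the
two optimality inequalities cancels `g` and leaves `(t - s) (h θ̂(t) - h θ̂(s)) ≤ 0`. Hence
`λ ↦ h (θ̂ λ)` is antitone, and the derivative of an antitone function is nonpositive. -/

lemma penalty_le_of_isMinOn {α : Type*} {S : Set α} {g h : α → ℝ} {s t : ℝ} {a b : α}
    (ha : a ∈ S) (hb : b ∈ S) (hst : s < t)
    (hmin_s : IsMinOn (fun θ => g θ + s * h θ) S a)
    (hmin_t : IsMinOn (fun θ => g θ + t * h θ) S b) :
    h b ≤ h a := by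
  have hs : g a + s * h a ≤ g b + s * h b := hmin_s hb
  have ht : g b + t * h b ≤ g a + t * h a := hmin_t ha
  nlinarith

lemma antitoneOn_penalty_of_isMinOn {α : Type*} {S : Set α} {g h : α → ℝ} {T : Set ℝ}
    {θ : ℝ → α} (hθ : ∀ t ∈ T, θ t ∈ S)
    (hmin : ∀ t ∈ T, IsMinOn (fun x => g x + t * h x) S (θ t)) :
    AntitoneOn (fun t => h (θ t)) T := fun s hs t ht hst => by
  rcases hst.lt_or_eq with hst | rfl
  · exact penalty_le_of_isMinOn (hθ s hs) (hθ t ht) hst (hmin s hs) (hmin t ht)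
  · rfl

lemma HasDerivAt.nonpos_of_antitoneOn_of_mem_nhds {f : ℝ → ℝ} {f' x : ℝ} {s : Set ℝ}
    (hf : HasDerivAt f f' x) (hs : s ∈ nhds x) (hanti : AntitoneOn f s) : f' ≤ 0 := by
  have hacc : AccPt x (Filter.principal s) := by
    simpa using (PerfectSpace.univ_preperfect x (Set.mem_univ x)).nhds_inter hs
  exact hf.hasDerivWithinAt.nonpos_of_antitoneOn hacc hanti

theorem penalty_value_nonincreasing_general {p : ℕ}
    (g h : EuclideanSpace ℝ (Fin p) → ℝ)
    (θhat : ℝ → EuclideanSpace ℝ (Fin p))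
    (O : Set (EuclideanSpace ℝ (Fin p))) (hO : IsOpen O)
    (hpath : ∀ t : ℝ, 0 < t → θhat t ∈ O)
    (hh_smooth : ContDiffOn ℝ 2 h O)
    (hmin : ∀ t : ℝ, 0 < t → IsMinOn (fun θ => g θ + t * h θ) Set.univ (θhat t))
    (lam : ℝ) (hlam : 0 < lam)
    (θ' : EuclideanSpace ℝ (Fin p))
    (hdiff : HasDerivAt θhat θ' lam) :
    HasDerivAt (fun t => h (θhat t)) (fderiv ℝ h (θhat lam) θ') lam ∧
    fderiv ℝ h (θhat lam) θ' ≤ 0 := by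
  have hh_diff : DifferentiableAt ℝ h (θhat lam) :=
    (hh_smooth.contDiffAt (hO.mem_nhds (hpath lam hlam))).differentiableAt two_ne_zero
  have hchain : HasDerivAt (fun t => h (θhat t)) (fderiv ℝ h (θhat lam) θ') lam :=
    hh_diff.hasFDerivAt.comp_hasDerivAt lam hdiff
  have hanti : AntitoneOn (fun t => h (θhat t)) (Set.Ioi 0) :=
    antitoneOn_penalty_of_isMinOn (fun _ _ => Set.mem_univ _) hmin
  exact ⟨hchain, hchain.nonpos_of_antitoneOn_of_mem_nhds (Ioi_mem_nhds hlam) hanti⟩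

/-- Let `f(θ, λ) = g(θ) + λ h(θ)` with `g` `m`-strongly convex and `C²`, `h`
convex and `C²` on an open set containing the solution path, and `λ > 0`. If `θ̂(λ)` is the
unique minimizer and `θ̂` is differentiable at `λ`, then
`d/dλ [h(θ̂(λ))] = ∇h(θ̂(λ))ᵀ θ̂'(λ) ≤ 0`: the penalty value is non-increasing in `λ`. -/
theorem penalty_value_nonincreasing {p : ℕ} (m : ℝ) (hm : 0 < m)
    (g h : EuclideanSpace ℝ (Fin p) → ℝ)
    (hg_conv : StrongConvexOn Set.univ m g) (hg_smooth : ContDiff ℝ 2 g)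
    (hh_conv : ConvexOn ℝ Set.univ h)
    (θhat : ℝ → EuclideanSpace ℝ (Fin p))
    (O : Set (EuclideanSpace ℝ (Fin p))) (hO : IsOpen O)
    (hpath : ∀ t : ℝ, 0 < t → θhat t ∈ O)
    (hh_smooth : ContDiffOn ℝ 2 h O)
    (hmin : ∀ t : ℝ, 0 < t → IsMinOn (fun θ => g θ + t * h θ) Set.univ (θhat t))
    (lam : ℝ) (hlam : 0 < lam)
    (θ' : EuclideanSpace ℝ (Fin p))
    (hdiff : HasDerivAt θhat θ' lam) :
    HasDerivAt (fun t => h (θhat t)) (fderiv ℝ h (θhat lam) θ') lam ∧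
    fderiv ℝ h (θhat lam) θ' ≤ 0 :=
  penalty_value_nonincreasing_general g h θhat O hO hpath hh_smooth hmin lam hlam θ' hdiff
end
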